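/- arXiv:1708.02606 — 4 statements merged into one kernel-verified Lean document; each statement's English description precedes it below -/
import Mathlib

section
/- Let X be a connected, locally path connected topological space and x₀ ∈ X. If X is a small loop transfer space at x₀, then both π₁^{qtop}(X, x₀) and π₁^{wh}(X, x₀) are topological groups (i.e., multiplication and inversion are continuous with respect to each of these topologies). -/
open TopologicalSpace

attribute [local instance] Path.Homotopic.setoid

/-- The homotopy class of a loop, as an element of the fundamental group. -/
noncomputable def loopClass {X : Type*} [TopologicalSpace X] {x : X} (γ : Path x x) :
    FundamentalGroup X x :=
  FundamentalGroup.fromPath (X := TopCat.of X) ⟦γ⟧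

/-- `α` is a small loop transfer (SLT) path: for every open neighborhood `U` of `α 0`
there is an open neighborhood `V` of `α 1` such that every loop at `α 1` inside `V` is
path-homotopic to some loop at `α 0` inside `U` conjugated along `α`. -/
def IsSLTPath {X : Type*} [TopologicalSpace X] {x₀ x₁ : X} (α : Path x₀ x₁) : Prop :=
  ∀ U : Set X, IsOpen U → x₀ ∈ U →
    ∃ V : Set X, IsOpen V ∧ x₁ ∈ V ∧
      ∀ γ : Path x₁ x₁, (∀ t, γ t ∈ V) →
        ∃ γ' : Path x₀ x₀, (∀ t, γ' t ∈ U) ∧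
          γ'.Homotopic ((α.trans γ).trans α.symm)

/-- `X` is a small loop transfer space at `x₀`: every path starting at `x₀` is an SLT path. -/
def IsSLTAt (X : Type*) [TopologicalSpace X] (x₀ : X) : Prop :=
  ∀ (x₁ : X) (α : Path x₀ x₁), IsSLTPath α

/-- `X` is SLTL at `x₀`: every loop based at `x₀` is an SLT path. -/
def IsSLTLAt (X : Type*) [TopologicalSpace X] (x₀ : X) : Prop :=
  ∀ γ : Path x₀ x₀, IsSLTPath γ

/-- `X` is SLTP at `x₀`: every non-loop path starting at `x₀` is an SLT path. -/
def IsSLTPAt (X : Type*) [TopologicalSpace X] (x₀ : X) : Prop :=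
  ∀ (x₁ : X) (α : Path x₀ x₁), x₁ ≠ x₀ → IsSLTPath α

/-- The set of homotopy classes of loops based at `x₀` with image contained in `U`;
this is the image `i₊π₁(U, x₀)` of the homomorphism induced by the inclusion `U → X`. -/
noncomputable def loopClassesIn {X : Type*} [TopologicalSpace X] (x₀ : X) (U : Set X) :
    Set (FundamentalGroup X x₀) :=
  { g | ∃ γ : Path x₀ x₀, (∀ t, γ t ∈ U) ∧ g = loopClass γ }

/-- The quotient topology on the fundamental group, coinduced by the map from the loop
space (with the compact-open topology) sending a loop to its homotopy class. -/
noncomputable def qtop (X : Type*) [TopologicalSpace X] (x₀ : X) :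
    TopologicalSpace (FundamentalGroup X x₀) :=
  coinduced (fun γ : Path x₀ x₀ => loopClass γ) inferInstance

/-- The whisker topology on the fundamental group, generated by the basis of cosets
`[α] · i₊π₁(U, x₀)` for `U` an open neighborhood of `x₀`. -/
noncomputable def whTop (X : Type*) [TopologicalSpace X] (x₀ : X) :
    TopologicalSpace (FundamentalGroup X x₀) :=
  generateFrom { S | ∃ (g : FundamentalGroup X x₀) (U : Set X), IsOpen U ∧ x₀ ∈ U ∧
      S = (fun h => g * h) '' loopClassesIn x₀ U }

/-- A loop based at `x` is small if every open neighborhood of `x` contains a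
representative of its homotopy class. -/
def IsSmallLoop {X : Type*} [TopologicalSpace X] {x : X} (γ : Path x x) : Prop :=
  ∀ U : Set X, IsOpen U → x ∈ U →
    ∃ δ : Path x x, (∀ t, δ t ∈ U) ∧ δ.Homotopic γ

/-- `π₁ˢ(X, x)`: the set of homotopy classes of small loops based at `x`. -/
noncomputable def pi1s {X : Type*} [TopologicalSpace X] (x : X) :
    Set (FundamentalGroup X x) :=
  { g | ∃ γ : Path x x, IsSmallLoop γ ∧ g = loopClass γ }

/-- `π₁ˢᵍ(X, x₀)`: the subgroup generated by classes `[α * β * α⁻¹]` where `α` is a path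
starting at `x₀` and `β` is a small loop based at `α 1`. -/
noncomputable def pi1sg {X : Type*} [TopologicalSpace X] (x₀ : X) :
    Subgroup (FundamentalGroup X x₀) :=
  Subgroup.closure { g | ∃ (x₁ : X) (α : Path x₀ x₁) (β : Path x₁ x₁), IsSmallLoop β ∧
      g = loopClass ((α.trans β).trans α.symm) }

/-- The path Spanier group of a path open cover `V` at `x₀`: the subgroup generated by the
classes `[α * β * α⁻¹]` where `α` is a path starting at `x₀` and `β` is a loop based at
`α 1` with image inside `V α`. -/
noncomputable def pathSpanierGroup {X : Type*} [TopologicalSpace X] (x₀ : X)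
    (V : ∀ x₁ : X, Path x₀ x₁ → Set X) : Subgroup (FundamentalGroup X x₀) :=
  Subgroup.closure { g | ∃ (x₁ : X) (α : Path x₀ x₁) (β : Path x₁ x₁),
      (∀ t, β t ∈ V x₁ α) ∧ g = loopClass ((α.trans β).trans α.symm) }

/-- `X` is small "small loop" transfer (SSLT) at `x₀`. -/
def IsSSLTAt (X : Type*) [TopologicalSpace X] (x₀ : X) : Prop :=
  ∀ (x₁ : X) (α : Path x₀ x₁) (U : Set X), IsOpen U → x₀ ∈ U →
    ∃ V : Set X, IsOpen V ∧ x₁ ∈ V ∧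
      ∀ β : Path x₁ x₁, IsSmallLoop β → (∀ t, β t ∈ V) →
        ∃ γ : Path x₀ x₀, (∀ t, γ t ∈ U) ∧
          γ.Homotopic ((α.trans β).trans α.symm)

/-- `X` is semilocally small generated: every point has an open neighborhood `U` with
`i₊π₁(U, x) ≤ π₁ˢᵍ(X, x)`. -/
noncomputable def SemilocallySmallGenerated (X : Type*) [TopologicalSpace X] : Prop :=
  ∀ x : X, ∃ U : Set X, IsOpen U ∧ x ∈ U ∧ loopClassesIn x U ⊆ (pi1sg x : Set (FundamentalGroup X x))

/-!
The subgroups `i₊π₁(U, x₀)`, for `U` an open neighbourhood of `x₀`, form a group filter basis: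
they are closed under products and inverses, and the SLT property of loops at `x₀` is exactly the
conjugation axiom. The whisker topology is the group topology of this basis.

Every `qtop`-open set is whisker-open, because every compact-open neighbourhood of the constant
loop contains all loops inside some open `U ∋ x₀`. Conversely, given a loop `β`, subdivide it so
that each piece lies in an SLT neighbourhood of the initial segment of `β` ending there. A loop `η`
that is compact-open close to `β` can be joined to `β` at the division points inside these
neighbourhoods (local path connectedness), and each resulting small loop is transferred along `β`
into `U`; hence `[η] ∈ [β] · i₊π₁(U, x₀)`.
So `qtop` is also the group topology of the basis.
-/

open CategoryTheory Filter Set Topology unitInterval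

section
variable {X : Type*} [TopologicalSpace X] {x₀ x₁ y z : X}

def Path.hom (p : Path y z) : FundamentalGroupoid.mk y ⟶ FundamentalGroupoid.mk z :=
  Path.Homotopic.Quotient.mk p

@[simp] lemma Path.hom_trans {w : X} (p : Path y z) (q : Path z w) :
    (p.trans q).hom = p.hom ≫ q.hom := rfl

@[simp] lemma Path.hom_symm (p : Path y z) : p.symm.hom = CategoryTheory.inv p.hom := by
  rw [← Groupoid.inv_eq_inv]; rfl

@[simp] lemma Path.hom_refl (y : X) : (Path.refl y).hom = 𝟙 _ := rfl

lemma Path.hom_eq_hom_iff {p q : Path y z} : p.hom = q.hom ↔ p.Homotopic q :=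
  Path.Homotopic.Quotient.eq

@[simp] lemma Path.hom_cast {y' z' : X} (p : Path y z) (hy : y' = y) (hz : z' = z) :
    (p.cast hy hz).hom = eqToHom (congrArg _ hy) ≫ p.hom ≫ eqToHom (congrArg _ hz.symm) := by
  subst hy hz; simp

lemma loopClass_eq_hom (γ : Path x₀ x₀) : loopClass γ = γ.hom := rfl

lemma Path.hom_subpath_comp (γ : Path y z) (s t u : I) :
    (γ.subpath s t).hom ≫ (γ.subpath t u).hom = (γ.subpath s u).hom :=
  Path.hom_eq_hom_iff.2 ⟨Path.Homotopy.subpathTransSubpath γ s t u⟩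

lemma Path.trans_mem {w : X} {p : Path y z} {q : Path z w} {S : Set X} (hp : ∀ t, p t ∈ S)
    (hq : ∀ t, q t ∈ S) (t : I) : (p.trans q) t ∈ S := by
  have : (p.trans q) t ∈ range p ∪ range q := Path.trans_range p q ▸ mem_range_self t
  rcases this with ⟨u, hu⟩ | ⟨u, hu⟩
  · exact hu ▸ hp u
  · exact hu ▸ hq u

lemma Path.subpath_mem {γ : Path y z} {s t : I} {S : Set X} (h : MapsTo γ (uIcc s t) S) (u : I) :
    γ.subpath s t u ∈ S :=
  h.image_subset (γ.range_subpath s t ▸ mem_range_self u)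

def Path.initialSegment (γ : Path y z) (t : I) : Path y (γ t) :=
  (γ.subpath 0 t).cast γ.source.symm rfl

lemma Path.hom_initialSegment_comp (γ : Path y z) (s t : I) :
    (γ.initialSegment s).hom ≫ (γ.subpath s t).hom = (γ.initialSegment t).hom := by
  simp [Path.initialSegment, Path.hom_subpath_comp]

lemma Path.hom_initialSegment_zero (γ : Path y z) :
    (γ.initialSegment 0).hom = eqToHom (congrArg _ γ.source.symm) := by
  simp [Path.initialSegment]

lemma Path.hom_initialSegment_one (γ : Path y z) :
    (γ.initialSegment 1).hom = γ.hom ≫ eqToHom (congrArg _ γ.target.symm) := by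
  simp [Path.initialSegment]

variable {U V : Set X}

lemma loopClassesIn_mono {U' : Set X} (h : U ⊆ U') :
    loopClassesIn x₀ U ⊆ loopClassesIn x₀ U' := by
  rintro _ ⟨γ, hγ, rfl⟩
  exact ⟨γ, fun t => h (hγ t), rfl⟩

lemma one_mem_loopClassesIn (hx : x₀ ∈ U) : (1 : FundamentalGroup X x₀) ∈ loopClassesIn x₀ U :=
  ⟨Path.refl x₀, fun _ => hx, rfl⟩

lemma mul_mem_loopClassesIn {g h : FundamentalGroup X x₀} (hg : g ∈ loopClassesIn x₀ U)
    (hh : h ∈ loopClassesIn x₀ U) : g * h ∈ loopClassesIn x₀ U := by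
  obtain ⟨γ, hγ, rfl⟩ := hg
  obtain ⟨δ, hδ, rfl⟩ := hh
  exact ⟨δ.trans γ, Path.trans_mem hδ hγ, rfl⟩

lemma inv_mem_loopClassesIn {g : FundamentalGroup X x₀} (hg : g ∈ loopClassesIn x₀ U) :
    g⁻¹ ∈ loopClassesIn x₀ U := by
  obtain ⟨γ, hγ, rfl⟩ := hg
  exact ⟨γ.symm, fun t => hγ (σ t), rfl⟩

lemma comp_mem_loopClassesIn {f g : FundamentalGroupoid.mk x₀ ⟶ FundamentalGroupoid.mk x₀}
    (hf : f ∈ loopClassesIn x₀ U) (hg : g ∈ loopClassesIn x₀ U) : f ≫ g ∈ loopClassesIn x₀ U :=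
  mul_mem_loopClassesIn (g := g) (h := f) hg hf

def IsTransferNhd (U : Set X) (a : FundamentalGroupoid.mk x₀ ⟶ FundamentalGroupoid.mk y)
    (V : Set X) : Prop :=
  ∀ γ : Path y y, (∀ t, γ t ∈ V) → a ≫ γ.hom ≫ inv a ∈ loopClassesIn x₀ U

lemma IsSLTPath.exists_isTransferNhd {α : Path x₀ x₁} (h : IsSLTPath α) (hU : IsOpen U)
    (hx : x₀ ∈ U) : ∃ V, IsOpen V ∧ x₁ ∈ V ∧ IsTransferNhd U α.hom V := by
  obtain ⟨V, hV, hxV, hαV⟩ := h U hU hx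
  refine ⟨V, hV, hxV, fun γ hγ => ?_⟩
  obtain ⟨γ', hγ'U, hγ'⟩ := hαV γ hγ
  exact ⟨γ', hγ'U, by simpa [loopClass_eq_hom] using (Path.hom_eq_hom_iff.2 hγ').symm⟩

lemma IsTransferNhd.comp {a : FundamentalGroupoid.mk x₀ ⟶ FundamentalGroupoid.mk y}
    (h : IsTransferNhd U a V) {e : Path y z} (he : ∀ t, e t ∈ V) :
    IsTransferNhd U (a ≫ e.hom) V := fun γ hγ => by
  simpa using h ((e.trans γ).trans e.symm) (Path.trans_mem (Path.trans_mem he hγ) fun t => he _)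

lemma IsTransferNhd.conj_mem {a : FundamentalGroupoid.mk x₀ ⟶ FundamentalGroupoid.mk x₀}
    (h : IsTransferNhd U a V) {k : FundamentalGroup X x₀} (hk : k ∈ loopClassesIn x₀ V) :
    a ≫ k ≫ inv a ∈ loopClassesIn x₀ U := by
  obtain ⟨γ, hγ, rfl⟩ := hk
  exact h γ hγ

lemma IsTransferNhd.extend {y' z' : X} {a : FundamentalGroupoid.mk x₀ ⟶ FundamentalGroupoid.mk y}
    {b : FundamentalGroupoid.mk x₀ ⟶ FundamentalGroupoid.mk z} (ha : IsTransferNhd U a V)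
    {βs : Path y y'} {ηs : Path z z'} {c : Path y z} {c' : Path y' z'}
    (hβ : ∀ t, βs t ∈ V) (hη : ∀ t, ηs t ∈ V) (hc : ∀ t, c t ∈ V) (hc' : ∀ t, c' t ∈ V)
    (h : b ≫ inv c.hom ≫ inv a ∈ loopClassesIn x₀ U) :
    (b ≫ ηs.hom) ≫ inv c'.hom ≫ inv (a ≫ βs.hom) ∈ loopClassesIn x₀ U := by
  have hloop := ha (((c.trans ηs).trans c'.symm).trans βs.symm)
    (Path.trans_mem (Path.trans_mem (Path.trans_mem hc hη) fun t => hc' _) fun t => hβ _)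
  convert comp_mem_loopClassesIn h hloop using 1
  simp

lemma exists_connector_of_chain {β η : Path x₀ x₁} {t : ℕ → I} {W : ℕ → Set X} {n : ℕ}
    (hW : ∀ m < n, IsTransferNhd U (β.initialSegment (t m)).hom (W m))
    (hβ : ∀ m < n, MapsTo β (uIcc (t m) (t (m + 1))) (W m))
    (hη : ∀ m < n, MapsTo η (uIcc (t m) (t (m + 1))) (W m))
    (hjoin : ∀ m < n, JoinedIn (W m ∩ W (m + 1)) (β (t (m + 1))) (η (t (m + 1))))
    (hxU : x₀ ∈ U) (hxW : x₀ ∈ W 0) (ht₀ : t 0 = 0) :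
    ∀ m ≤ n, ∃ c : Path (β (t m)) (η (t m)), (∀ s, c s ∈ W m) ∧
      (η.initialSegment (t m)).hom ≫ inv c.hom ≫ inv (β.initialSegment (t m)).hom ∈
        loopClassesIn x₀ U := by
  intro m hm
  induction m with
  | zero =>
    rw [ht₀]
    refine ⟨(Path.refl x₀).cast β.source η.source, fun _ => hxW, ?_⟩
    simpa [Path.hom_initialSegment_zero] using one_mem_loopClassesIn hxU
  | succ m ih =>
    have hmn : m < n := hm
    obtain ⟨c, hcW, hc⟩ := ih hmn.le
    obtain ⟨c', hc'W⟩ := hjoin m hmn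
    refine ⟨c', fun s => (hc'W s).2, ?_⟩
    rw [← Path.hom_initialSegment_comp η (t m), ← Path.hom_initialSegment_comp β (t m)]
    exact (hW m hmn).extend (Path.subpath_mem (hβ m hmn)) (Path.subpath_mem (hη m hmn)) hcW
      (fun s => (hc'W s).1) hc

lemma exists_transfer_partition (hslt : IsSLTAt X x₀) (β : Path x₀ x₁) (hU : IsOpen U)
    (hxU : x₀ ∈ U) : ∃ (t : ℕ → I) (n : ℕ) (W : ℕ → Set X), t 0 = 0 ∧ t n = 1 ∧
      ∀ m, IsOpen (W m) ∧ IsTransferNhd U (β.initialSegment (t m)).hom (W m) ∧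
        MapsTo β (uIcc (t m) (t (m + 1))) (W m) := by
  choose V hVopen hVmem hV using fun s : I =>
    (hslt (β s) (β.initialSegment s)).exists_isTransferNhd hU hxU
  have : LocallyPathConnectedSpace I := (convex_Icc (0 : ℝ) 1).locallyPathConnectedSpace
  set C : I → Set I := fun s => connectedComponentIn (β ⁻¹' V s) s
  obtain ⟨t, ht₀, hmono, ⟨n, hn⟩, hC⟩ := exists_monotone_Icc_subset_open_cover_unitInterval
    (c := C) (fun s => ((hVopen s).preimage β.continuous).connectedComponentIn)
    (fun s _ => mem_iUnion.2 ⟨s, mem_connectedComponentIn (hVmem s)⟩)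
  choose i hi using hC
  have hCV (s : I) : MapsTo β (C s) (V s) := fun _ h => connectedComponentIn_subset (β ⁻¹' V s) s h
  refine ⟨t, n, fun m => V (i m), ht₀, hn n le_rfl, fun m => ⟨hVopen _, ?_, ?_⟩⟩
  -- A connected subset of `I` is an interval, so `C (i m)` contains the segment from `i m` to `t m`.
  · have htC : t m ∈ C (i m) := hi m (left_mem_Icc.2 (hmono m.le_succ))
    have hseg : uIcc (i m) (t m) ⊆ C (i m) :=
      (isPreconnected_connectedComponentIn (F := β ⁻¹' V (i m))).ordConnected.uIcc_subset
        (mem_connectedComponentIn (hVmem (i m))) htC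
    rw [← Path.hom_initialSegment_comp β (i m)]
    exact (hV _).comp (Path.subpath_mem ((hCV _).mono_left hseg))
  · rw [uIcc_of_le (hmono m.le_succ)]
    exact (hCV _).mono_left (hi m)

lemma hom_comp_inv_mem_of_connector {β η : Path x₀ x₁}
    (hW : IsTransferNhd U (β.initialSegment 1).hom V) (c : Path (β 1) (η 1)) (hc : ∀ s, c s ∈ V)
    (h : (η.initialSegment 1).hom ≫ inv c.hom ≫ inv (β.initialSegment 1).hom ∈
      loopClassesIn x₀ U) :
    η.hom ≫ inv β.hom ∈ loopClassesIn x₀ U := by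
  have hloop := hW (c.cast rfl (β.target.trans η.target.symm)) hc
  convert comp_mem_loopClassesIn h hloop using 1
  simp [Path.hom_initialSegment_one]

theorem eventually_hom_comp_inv_mem_loopClassesIn [LocallyPathConnectedSpace X]
    (hslt : IsSLTAt X x₀) (β : Path x₀ x₁) (hU : IsOpen U) (hxU : x₀ ∈ U) :
    ∀ᶠ η in 𝓝 β, η.hom ≫ inv β.hom ∈ loopClassesIn x₀ U := by
  obtain ⟨t, n, W, ht₀, htn, hW⟩ := exists_transfer_partition hslt β hU hxU
  choose hWopen hWtr hβW using hW
  have hmapsTo (m : ℕ) : ∀ᶠ η : Path x₀ x₁ in 𝓝 β, MapsTo η (uIcc (t m) (t (m + 1))) (W m) :=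
    (continuous_induced_dom.tendsto β).eventually
      (ContinuousMap.eventually_mapsTo isCompact_uIcc (hWopen m) (hβW m))
  have hjoin (m : ℕ) : ∀ᶠ η in 𝓝 β,
      η (t (m + 1)) ∈ pathComponentIn (W m ∩ W (m + 1)) (β (t (m + 1))) :=
    (continuous_eval_const _).continuousAt.preimage_mem_nhds
      ((((hWopen m).inter (hWopen (m + 1))).pathComponentIn _).mem_nhds
        (mem_pathComponentIn_self ⟨hβW m right_mem_uIcc, hβW (m + 1) left_mem_uIcc⟩))
  filter_upwards [(finite_Iio n).eventually_all.2 fun m _ => (hmapsTo m).and (hjoin m)]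
    with η hη
  obtain ⟨c, hcW, hc⟩ := exists_connector_of_chain (fun m _ => hWtr m) (fun m _ => hβW m)
    (fun m hm => (hη m hm).1) (fun m hm => (hη m hm).2) hxU
    (by simpa [ht₀] using hβW 0 left_mem_uIcc) ht₀ n le_rfl
  have hWn := hWtr n
  revert c
  rw [htn] at hWn ⊢
  exact hom_comp_inv_mem_of_connector hWn
end

section
variable {X : Type*} [TopologicalSpace X] {x₀ : X}

lemma Path.exists_forall_mem_of_mem_nhds_refl {O : Set (Path x₀ x₀)}
    (hO : O ∈ 𝓝 (Path.refl x₀)) :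
    ∃ U, IsOpen U ∧ x₀ ∈ U ∧ ∀ γ : Path x₀ x₀, (∀ t, γ t ∈ U) → γ ∈ O := by
  rw [nhds_induced] at hO
  obtain ⟨O', hO', hO'O⟩ := mem_comap.1 hO
  obtain ⟨⟨K, U⟩, ⟨-, hxU, hU⟩, hKU⟩ :=
    ((nhds_basis_opens x₀).nhds_continuousMapConst (X := I)).mem_iff.1 hO'
  exact ⟨U, hU, hxU, fun γ hγ => hO'O (hKU fun t _ => hγ t)⟩

lemma loopClass_surjective : Function.Surjective (loopClass (x := x₀)) :=
  Path.Homotopic.Quotient.mk_surjective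

lemma IsSLTAt.isSLTLAt (h : IsSLTAt X x₀) : IsSLTLAt X x₀ := fun γ => h x₀ γ

variable (X x₀)

abbrev whiskerGroupFilterBasis (h : IsSLTLAt X x₀) : GroupFilterBasis (FundamentalGroup X x₀) where
  sets := loopClassesIn x₀ '' {U | IsOpen U ∧ x₀ ∈ U}
  nonempty := ⟨_, mem_image_of_mem _ ⟨isOpen_univ, mem_univ x₀⟩⟩
  inter_sets := by
    rintro _ _ ⟨U, ⟨hU, hxU⟩, rfl⟩ ⟨U', ⟨hU', hxU'⟩, rfl⟩
    exact ⟨_, ⟨U ∩ U', ⟨hU.inter hU', hxU, hxU'⟩, rfl⟩,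
      subset_inter (loopClassesIn_mono inter_subset_left) (loopClassesIn_mono inter_subset_right)⟩
  one' := by
    rintro _ ⟨U, ⟨-, hxU⟩, rfl⟩
    exact one_mem_loopClassesIn hxU
  mul' := by
    rintro _ ⟨U, hU, rfl⟩
    exact ⟨_, ⟨U, hU, rfl⟩, Set.mul_subset_iff.2 fun _ hg _ hh => mul_mem_loopClassesIn hg hh⟩
  inv' := by
    rintro _ ⟨U, hU, rfl⟩
    exact ⟨_, ⟨U, hU, rfl⟩, fun _ hg => inv_mem_loopClassesIn hg⟩
  conj' := by
    rintro g _ ⟨U, ⟨hU, hxU⟩, rfl⟩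
    obtain ⟨α, rfl⟩ := loopClass_surjective g
    obtain ⟨V, hV, hxV, hαV⟩ := (h α.symm).exists_isTransferNhd hU hxU
    refine ⟨_, ⟨V, ⟨hV, hxV⟩, rfl⟩, fun k hk => ?_⟩
    have := hαV.conj_mem hk
    rw [Path.hom_symm, IsIso.inv_inv, ← Groupoid.inv_eq_inv] at this
    exact this

variable {X x₀}

lemma whiskerGroupFilterBasis_nhds_hasBasis (h : IsSLTLAt X x₀) (g : FundamentalGroup X x₀) :
    (@nhds _ (whiskerGroupFilterBasis X x₀ h).topology g).HasBasis
      (fun U : Set X => IsOpen U ∧ x₀ ∈ U) (fun U => (g * ·) '' loopClassesIn x₀ U) := by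
  have := (whiskerGroupFilterBasis X x₀ h).nhds_hasBasis g
  exact ⟨fun S => this.mem_iff.trans ⟨fun ⟨_, ⟨U, hU, rfl⟩, hS⟩ => ⟨U, hU, hS⟩,
    fun ⟨U, hU, hS⟩ => ⟨_, ⟨U, hU, rfl⟩, hS⟩⟩⟩

theorem whTop_eq_topology (h : IsSLTLAt X x₀) :
    whTop X x₀ = (whiskerGroupFilterBasis X x₀ h).topology := by
  have basis := whiskerGroupFilterBasis_nhds_hasBasis h
  let := (whiskerGroupFilterBasis X x₀ h).topology
  refine le_antisymm (fun S hS => ?_) (le_generateFrom ?_)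
  · refine (@isOpen_iff_forall_mem_open _ (whTop X x₀) S).2 fun g hg => ?_
    obtain ⟨U, ⟨hU, hxU⟩, hgU⟩ := (basis g).mem_iff.1 (hS.mem_nhds hg)
    exact ⟨_, hgU, GenerateOpen.basic _ ⟨g, U, hU, hxU, rfl⟩,
      1, one_mem_loopClassesIn hxU, mul_one g⟩
  · rintro _ ⟨g, U, hU, hxU, rfl⟩
    refine isOpen_iff_mem_nhds.2 ?_
    rintro _ ⟨k, hk, rfl⟩
    refine (basis (g * k)).mem_iff.2 ⟨U, ⟨hU, hxU⟩, ?_⟩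
    rintro _ ⟨k', hk', rfl⟩
    exact ⟨k * k', mul_mem_loopClassesIn hk hk', (mul_assoc g k k').symm⟩

theorem qtop_eq_topology [LocallyPathConnectedSpace X] (h : IsSLTAt X x₀) :
    qtop X x₀ = (whiskerGroupFilterBasis X x₀ h.isSLTLAt).topology := by
  have basis := whiskerGroupFilterBasis_nhds_hasBasis h.isSLTLAt
  let := (whiskerGroupFilterBasis X x₀ h.isSLTLAt).topology
  refine le_antisymm (continuous_iff_coinduced_le.1 ?_) fun S hS => ?_
  · refine continuous_iff_continuousAt.2 fun β => (basis _).tendsto_right_iff.2 ?_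
    rintro U ⟨hU, hxU⟩
    filter_upwards [eventually_hom_comp_inv_mem_loopClassesIn h β hU hxU] with η hη
    exact ⟨_, hη, by simp [loopClass_eq_hom]⟩
  · refine isOpen_iff_mem_nhds.2 fun g hg => ?_
    obtain ⟨β, rfl⟩ := loopClass_surjective g
    have hO : (fun δ : Path x₀ x₀ => δ.trans β) ⁻¹' ((fun γ => loopClass γ) ⁻¹' S) ∈
        𝓝 (Path.refl x₀) :=
      (isOpen_coinduced.1 hS |>.preimage (Path.continuous_trans.comp
        (continuous_id.prodMk continuous_const))).mem_nhds (by simpa [loopClass_eq_hom] using hg)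
    obtain ⟨U, hU, hxU, hUO⟩ := Path.exists_forall_mem_of_mem_nhds_refl hO
    refine (basis _).mem_iff.2 ⟨U, ⟨hU, hxU⟩, ?_⟩
    rintro _ ⟨_, ⟨κ, hκ, rfl⟩, rfl⟩
    exact hUO κ hκ
end

theorem slt_topologicalGroups_general {X : Type*} [TopologicalSpace X]
    [LocallyPathConnectedSpace X] (x₀ : X) (h : IsSLTAt X x₀) :
    @IsTopologicalGroup (FundamentalGroup X x₀) (qtop X x₀) _ ∧
      @IsTopologicalGroup (FundamentalGroup X x₀) (whTop X x₀) _ := by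
  rw [qtop_eq_topology h, whTop_eq_topology h.isSLTLAt]
  exact ⟨GroupFilterBasis.isTopologicalGroup _, GroupFilterBasis.isTopologicalGroup _⟩

/-- For a connected, locally path connected space, if `X` is SLT at `x₀` then
both `π₁^{qtop}(X, x₀)` and `π₁^{wh}(X, x₀)` are topological groups. -/
theorem slt_topologicalGroups {X : Type*} [TopologicalSpace X] [ConnectedSpace X]
    [LocallyPathConnectedSpace X] (x₀ : X) (h : IsSLTAt X x₀) :
    @IsTopologicalGroup (FundamentalGroup X x₀) (qtop X x₀) _ ∧
      @IsTopologicalGroup (FundamentalGroup X x₀) (whTop X x₀) _ :=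
  slt_topologicalGroups_general x₀ h
end

section
/- Let X be a topological space and x₀ ∈ X. Then X is a small loop transfer space at x₀ with respect to loops (SLTL at x₀) if and only if π₁^{wh}(X, x₀) is a topological group (i.e., multiplication and inversion are continuous with respect to the whisker topology). -/
open TopologicalSpace

attribute [local instance] Path.Homotopic.setoid

/-!
The neighbourhoods of `g` in the whisker topology are the cosets `g · i₊π₁(U, x₀)`, and these
`i₊π₁(U, x₀)` form a directed family of subgroups. For a topology of this kind, translations are
continuous and multiplication and inversion are continuous at `1` (the basic neighbourhoods of `1`
are subgroups), so it is a group topology exactly when every conjugation is continuous at `1`: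
every conjugate `[α]⁻¹ · i₊π₁(U, x₀) · [α]` contains some `i₊π₁(V, x₀)`. For loops `α` this is
precisely the SLT property of `α`.
-/

open Filter Topology Pointwise

section CosetTopology

variable {G ι : Type*} [Group G]

def cosetTopology (B : ι → Subgroup G) : TopologicalSpace G :=
  generateFrom {S | ∃ (g : G) (i : ι), S = g • (B i : Set G)}

variable {B : ι → Subgroup G} [Nonempty ι]

theorem cosetTopology_nhds_hasBasis (hB : Directed (· ≥ ·) B) (g : G) :
    (@nhds G (cosetTopology B) g).HasBasis (fun _ => True) fun i => g • (B i : Set G) := by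
  have hcosets : Directed (· ≥ ·) fun i => g • (B i : Set G) :=
    hB.mono_comp _ fun _ _ h => Set.smul_set_mono h
  convert hasBasis_iInf_principal hcosets
  rw [cosetTopology, nhds_generateFrom]
  apply le_antisymm
  · exact le_iInf fun i => iInf₂_le _ ⟨⟨1, B i |>.one_mem, mul_one g⟩, g, i, rfl⟩
  · refine le_iInf₂ fun s ⟨hgs, k, i, hs⟩ => ?_
    subst hs
    rw [(leftCoset_eq_iff (B i)).mpr ((mem_leftCoset_iff k).mp hgs)]
    exact iInf_le _ i

theorem isTopologicalGroup_cosetTopology_iff (hB : Directed (· ≥ ·) B) :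
    @IsTopologicalGroup G (cosetTopology B) _ ↔
      ∀ (a : G) (i : ι), ∃ j, ∀ c ∈ B j, a * c * a⁻¹ ∈ B i := by
  let := cosetTopology B
  have h1 : (𝓝 (1 : G)).HasBasis (fun _ => True) fun i => (B i : Set G) := by
    simpa only [one_smul] using cosetTopology_nhds_hasBasis hB 1
  have hconj (a : G) : Tendsto (a * · * a⁻¹) (𝓝 1) (𝓝 1) ↔
      ∀ i, ∃ j, ∀ c ∈ B j, a * c * a⁻¹ ∈ B i := by
    simp [h1.tendsto_iff h1]
  simp_rw [← hconj]
  refine ⟨fun _ a => ?_, fun h => IsTopologicalGroup.of_nhds_one ?_ ?_ ?_ h⟩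
  · simpa using ((continuous_const_mul a).mul_const a⁻¹).tendsto 1
  · rw [(h1.prod_self).tendsto_iff h1]
    exact fun i _ => ⟨i, trivial, fun x hx => (B i).mul_mem hx.1 hx.2⟩
  · rw [h1.tendsto_iff h1]
    exact fun i _ => ⟨i, trivial, fun x hx => (B i).inv_mem hx⟩
  · exact fun g => (cosetTopology_nhds_hasBasis hB g).eq_of_same_basis (h1.map _)

end CosetTopology

section LoopClasses

variable {X : Type*} [TopologicalSpace X] {x₀ : X}

theorem loopClass_eq_loopClass_iff {γ δ : Path x₀ x₀} :
    loopClass γ = loopClass δ ↔ γ.Homotopic δ :=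
  Quotient.eq

theorem loopClass_surjective_s4 : Function.Surjective (loopClass : Path x₀ x₀ → _) :=
  Quotient.exists_rep

theorem loopClass_refl : loopClass (Path.refl x₀) = 1 :=
  rfl

-- `FundamentalGroup` multiplies in the order of morphism composition.
theorem loopClass_trans (γ δ : Path x₀ x₀) :
    loopClass (γ.trans δ) = loopClass δ * loopClass γ :=
  rfl

theorem loopClass_symm (γ : Path x₀ x₀) : loopClass γ.symm = (loopClass γ)⁻¹ := by
  refine eq_inv_of_mul_eq_one_left ?_
  rw [← loopClass_trans, ← loopClass_refl, loopClass_eq_loopClass_iff]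
  exact ⟨(Path.Homotopy.reflTransSymm γ).symm⟩

theorem loopClass_conj (α γ : Path x₀ x₀) :
    loopClass ((α.trans γ).trans α.symm) = (loopClass α)⁻¹ * loopClass γ * loopClass α := by
  rw [loopClass_trans, loopClass_trans, loopClass_symm, mul_assoc]

noncomputable def loopSubgroup (U : Set X) (hU : x₀ ∈ U) : Subgroup (FundamentalGroup X x₀) where
  carrier := loopClassesIn x₀ U
  one_mem' := ⟨Path.refl x₀, fun _ => hU, loopClass_refl.symm⟩
  mul_mem' := by
    rintro _ _ ⟨γ, hγ, rfl⟩ ⟨δ, hδ, rfl⟩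
    refine ⟨δ.trans γ, fun t => ?_, loopClass_trans δ γ⟩
    rw [Path.trans_apply]
    split_ifs
    exacts [hδ _, hγ _]
  inv_mem' := by
    rintro _ ⟨γ, hγ, rfl⟩
    exact ⟨γ.symm, fun t => hγ _, loopClass_symm γ⟩

theorem mem_loopSubgroup {U : Set X} {hU : x₀ ∈ U} {g : FundamentalGroup X x₀} :
    g ∈ loopSubgroup U hU ↔ g ∈ loopClassesIn x₀ U :=
  Iff.rfl

theorem loopSubgroup_mono {U V : Set X} (hU : x₀ ∈ U) (hUV : U ⊆ V) :
    loopSubgroup U hU ≤ loopSubgroup V (hUV hU) :=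
  fun _ ⟨γ, hγ, hg⟩ => ⟨γ, fun t => hUV (hγ t), hg⟩

theorem directed_loopSubgroup_openNhdsOf :
    Directed (· ≥ ·) fun U : OpenNhdsOf x₀ => loopSubgroup (U : Set X) U.mem :=
  Monotone.directed_ge fun _ _ hUV => loopSubgroup_mono _ hUV

theorem whTop_eq_cosetTopology :
    whTop X x₀ = cosetTopology fun U : OpenNhdsOf x₀ => loopSubgroup (U : Set X) U.mem := by
  refine congrArg generateFrom (Set.ext fun S => ⟨?_, ?_⟩)
  · rintro ⟨g, U, hUo, hUx, rfl⟩
    exact ⟨g, ⟨⟨U, hUo⟩, hUx⟩, rfl⟩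
  · rintro ⟨g, U, rfl⟩
    exact ⟨g, U, U.isOpen, U.mem, rfl⟩

theorem isSLTPath_iff_conj_mem (α : Path x₀ x₀) :
    IsSLTPath α ↔ ∀ U : OpenNhdsOf x₀, ∃ V : OpenNhdsOf x₀, ∀ c ∈ loopClassesIn x₀ V,
      (loopClass α)⁻¹ * c * loopClass α ∈ loopClassesIn x₀ U := by
  refine ⟨fun h U => ?_, fun h U hUo hUx => ?_⟩
  · obtain ⟨V, hVo, hVx, hV⟩ := h U U.isOpen U.mem
    refine ⟨⟨⟨V, hVo⟩, hVx⟩, ?_⟩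
    rintro _ ⟨γ, hγ, rfl⟩
    obtain ⟨γ', hγ', hhom⟩ := hV γ hγ
    exact ⟨γ', hγ', ((loopClass_eq_loopClass_iff.mpr hhom).trans (loopClass_conj α γ)).symm⟩
  · obtain ⟨V, hV⟩ := h ⟨⟨U, hUo⟩, hUx⟩
    refine ⟨V, V.isOpen, V.mem, fun γ hγ => ?_⟩
    obtain ⟨γ', hγ', hconj⟩ := hV _ ⟨γ, hγ, rfl⟩
    exact ⟨γ', hγ', loopClass_eq_loopClass_iff.mp (hconj.symm.trans (loopClass_conj α γ).symm)⟩

end LoopClasses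

/-- `X` is SLTL at `x₀` iff `π₁^{wh}(X, x₀)` is a topological group. -/
theorem sltl_iff_wh_topologicalGroup {X : Type*} [TopologicalSpace X] (x₀ : X) :
    IsSLTLAt X x₀ ↔ @IsTopologicalGroup (FundamentalGroup X x₀) (whTop X x₀) _ := by
  rw [whTop_eq_cosetTopology, isTopologicalGroup_cosetTopology_iff directed_loopSubgroup_openNhdsOf]
  simp only [IsSLTLAt, isSLTPath_iff_conj_mem, mem_loopSubgroup]
  constructor
  · intro h a
    obtain ⟨γ, hγ⟩ := loopClass_surjective_s4 a⁻¹
    simpa [hγ] using h γ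
  · intro h γ
    simpa using h (loopClass γ)⁻¹
end

section
/- Let X be a connected, locally path connected topological space that is a small loop transfer space (SLT at every point), and let x₀ ∈ X. If π₁^{qtop}(X, x₀) is an indiscrete topological group (its only open subsets are the empty set and the whole group), then X is a small loop space, i.e., for every x ∈ X every loop based at x is a small loop. -/
open TopologicalSpace

attribute [local instance] Path.Homotopic.setoid

/-! If `X` is SLT at `x₀`, then for every open `V ∋ x₀` the set `i₊π₁(V, x₀)` of classes of
loops in `V` is open in `π₁^{qtop}(X, x₀)`: subdivide a loop `δ` so that each piece lies in an
open set whose loops transfer into `V` along the initial segment of `δ`; then every loop `δ'`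
close to `δ` in the compact-open topology differs from `δ` by a product of such transferred
loops. Indiscreteness forces `i₊π₁(V, x₀)` to be the whole group, and transferring along a path
from `x` to `x₀` makes every loop at `x` small. -/

open CategoryTheory Set unitInterval Filter Topology

namespace Path

variable {X : Type*} [TopologicalSpace X] {x y z : X}

def toArrow (p : Path x y) : FundamentalGroupoid.mk x ⟶ FundamentalGroupoid.mk y :=
  FundamentalGroupoid.fromPath ⟦p⟧

@[simp] lemma toArrow_trans (p : Path x y) (q : Path y z) :
    (p.trans q).toArrow = p.toArrow ≫ q.toArrow := rfl

@[simp] lemma toArrow_symm (p : Path x y) : p.symm.toArrow = CategoryTheory.inv p.toArrow := by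
  rw [← Groupoid.inv_eq_inv]
  rfl

@[simp] lemma toArrow_refl (x : X) : (Path.refl x).toArrow = 𝟙 _ := rfl

@[simp] lemma toArrow_cast (p : Path x y) {x' y' : X} (hx : x' = x) (hy : y' = y) :
    (p.cast hx hy).toArrow =
      eqToHom (congrArg FundamentalGroupoid.mk hx) ≫ p.toArrow ≫
        eqToHom (congrArg FundamentalGroupoid.mk hy.symm) := by
  subst hx hy
  simp

lemma toArrow_eq_toArrow_iff {p q : Path x y} : p.toArrow = q.toArrow ↔ p.Homotopic q :=
  FundamentalGroupoid.fromPath_eq_iff_homotopic p q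

def upTo (δ : Path x y) (t : I) : Path x (δ t) :=
  (δ.subpath 0 t).cast δ.source.symm rfl

lemma range_upTo (δ : Path x y) (t : I) : range (δ.upTo t) = δ '' Icc 0 t := by
  rw [upTo, ← range_subpath_of_le δ 0 t nonneg']
  rfl

lemma toArrow_upTo_comp_subpath (δ : Path x y) (s t : I) :
    (δ.upTo s).toArrow ≫ (δ.subpath s t).toArrow = (δ.upTo t).toArrow := by
  have h := (Homotopic.pathCast ⟨Homotopy.subpathTransSubpath δ 0 s t⟩ δ.source.symm rfl)
  exact toArrow_eq_toArrow_iff.mpr h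

lemma toArrow_upTo_one (δ : Path x y) :
    (δ.upTo 1).toArrow = δ.toArrow ≫ eqToHom (congrArg FundamentalGroupoid.mk δ.target.symm) := by
  simp [upTo, subpath_zero_one]

lemma toArrow_eq_comp_of_upTo {δ δ' : Path x y} {t : I} (ht : t = 1) (h : δ' t = δ t)
    {g : FundamentalGroup X x}
    (H : (δ'.upTo t).toArrow = g ≫ (δ.upTo t).toArrow ≫ ((Path.refl (δ t)).cast rfl h).toArrow) :
    δ'.toArrow = g ≫ δ.toArrow := by
  subst ht
  rw [← cancel_mono (eqToHom (congrArg FundamentalGroupoid.mk δ'.target.symm))]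
  simpa [toArrow_upTo_one] using H

end Path

section LoopClasses

variable {X : Type*} [TopologicalSpace X] {x₀ y z : X} {U V W : Set X}

lemma loopClass_eq_toArrow (γ : Path x₀ x₀) : loopClass γ = γ.toArrow := rfl

lemma toArrow_mem_loopClassesIn {γ : Path x₀ x₀} (hγ : range γ ⊆ U) :
    γ.toArrow ∈ loopClassesIn x₀ U :=
  ⟨γ, range_subset_iff.mp hγ, rfl⟩

lemma id_mem_loopClassesIn (hx₀ : x₀ ∈ U) : 𝟙 _ ∈ loopClassesIn x₀ U :=
  toArrow_mem_loopClassesIn (γ := Path.refl x₀) (by simpa using hx₀)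

lemma comp_mem_loopClassesIn_s10 {g h : FundamentalGroup X x₀} (hg : g ∈ loopClassesIn x₀ U)
    (hh : h ∈ loopClassesIn x₀ U) : g ≫ h ∈ loopClassesIn x₀ U := by
  obtain ⟨γ, hγ, rfl⟩ := hg
  obtain ⟨δ, hδ, rfl⟩ := hh
  refine toArrow_mem_loopClassesIn (γ := γ.trans δ) ?_
  rw [Path.trans_range]
  exact union_subset (range_subset_iff.mpr hγ) (range_subset_iff.mpr hδ)

lemma isSmallLoop_iff {γ : Path x₀ x₀} :
    IsSmallLoop γ ↔ ∀ U, IsOpen U → x₀ ∈ U → γ.toArrow ∈ loopClassesIn x₀ U := by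
  refine forall₃_congr fun U _ _ => exists_congr fun δ => and_congr_right fun _ => ?_
  rw [← Path.toArrow_eq_toArrow_iff, loopClass_eq_toArrow, eq_comm]

def ConjugatesInto (a : FundamentalGroupoid.mk x₀ ⟶ FundamentalGroupoid.mk y) (W V : Set X) :
    Prop :=
  ∀ ℓ : Path y y, range ℓ ⊆ W → a ≫ ℓ.toArrow ≫ inv a ∈ loopClassesIn x₀ V

lemma ConjugatesInto.comp_toArrow {a : FundamentalGroupoid.mk x₀ ⟶ FundamentalGroupoid.mk y}
    (ha : ConjugatesInto a W V) {r : Path y z} (hr : range r ⊆ W) :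
    ConjugatesInto (a ≫ r.toArrow) W V := by
  intro ℓ hℓ
  have hrℓ : range (r.trans (ℓ.trans r.symm)) ⊆ W := by
    simp only [Path.trans_range, Path.symm_range]
    exact union_subset hr (union_subset hℓ hr)
  simpa using ha _ hrℓ

lemma IsSLTPath.exists_conjugatesInto {α : Path x₀ y} (hα : IsSLTPath α) (hV : IsOpen V)
    (hx₀ : x₀ ∈ V) : ∃ W, IsOpen W ∧ y ∈ W ∧ ConjugatesInto α.toArrow W V := by
  obtain ⟨W, hW, hyW, htransfer⟩ := hα V hV hx₀
  refine ⟨W, hW, hyW, fun ℓ hℓ => ?_⟩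
  obtain ⟨γ, hγV, hγ⟩ := htransfer ℓ (range_subset_iff.mp hℓ)
  refine ⟨γ, hγV, ?_⟩
  simpa [loopClass_eq_toArrow] using (Path.toArrow_eq_toArrow_iff.mpr hγ).symm

end LoopClasses

lemma unitInterval.uIcc_subset_ball {s t : I} {r : ℝ} (ht : t ∈ Metric.ball s r) :
    uIcc s t ⊆ Metric.ball s r := by
  intro u hu
  have hu' : (u : ℝ) ∈ uIcc (s : ℝ) t := by
    rcases mem_uIcc.mp hu with h | h
    exacts [mem_uIcc.mpr (Or.inl h), mem_uIcc.mpr (Or.inr h)]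
  simp only [Metric.mem_ball, Subtype.dist_eq, Real.dist_eq] at ht ⊢
  exact (abs_sub_left_of_mem_uIcc hu').trans_lt ht

section Transfer

variable {X : Type*} [TopologicalSpace X] {x₀ x₁ : X} {V W : Set X}

lemma exists_toArrow_upTo_eq_of_le {δ δ' : Path x₀ x₁} {s t : I} (hst : s ≤ t)
    (hconj : ConjugatesInto (δ.upTo s).toArrow W V)
    (hδ : MapsTo δ (Icc s t) W) (hδ' : MapsTo δ' (Icc s t) W)
    {η : Path (δ s) (δ' s)} (hη : range η ⊆ W) {η' : Path (δ t) (δ' t)} (hη' : range η' ⊆ W)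
    {g : FundamentalGroup X x₀} (hg : g ∈ loopClassesIn x₀ V)
    (hs : (δ'.upTo s).toArrow = g ≫ (δ.upTo s).toArrow ≫ η.toArrow) :
    ∃ g' ∈ loopClassesIn x₀ V, (δ'.upTo t).toArrow = g' ≫ (δ.upTo t).toArrow ≫ η'.toArrow := by
  -- `ℓ` runs around the square formed by `η`, `η'` and the pieces of `δ'` and `δ` on `[s, t]`.
  set ℓ := η.trans ((δ'.subpath s t).trans (η'.symm.trans (δ.subpath s t).symm))
  have hℓ : range ℓ ⊆ W := by
    simp only [ℓ, Path.trans_range, Path.symm_range, Path.range_subpath_of_le _ _ _ hst]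
    exact union_subset hη (union_subset hδ'.image_subset (union_subset hη' hδ.image_subset))
  refine ⟨g ≫ (δ.upTo s).toArrow ≫ ℓ.toArrow ≫ inv (δ.upTo s).toArrow,
    comp_mem_loopClassesIn_s10 hg (hconj ℓ hℓ), ?_⟩
  rw [← δ.toArrow_upTo_comp_subpath s t, ← δ'.toArrow_upTo_comp_subpath s t, hs]
  simp [ℓ, -Path.symm_subpath]

end Transfer

structure TransferSubdivision {X : Type*} [TopologicalSpace X] {x₀ x₁ : X} (δ : Path x₀ x₁)
    (V : Set X) where
  m : ℕ
  τ : ℕ → I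
  W : ℕ → Set X
  τ_zero : τ 0 = 0
  τ_m : τ m = 1
  monotone_τ : Monotone τ
  isOpen_W : ∀ n, IsOpen (W n)
  mapsTo : ∀ n, MapsTo δ (Icc (τ n) (τ (n + 1))) (W n)
  conjugatesInto : ∀ n, ConjugatesInto (δ.upTo (τ n)).toArrow (W n) V

namespace TransferSubdivision

variable {X : Type*} [TopologicalSpace X] {x₀ x₁ : X} {V : Set X} {δ : Path x₀ x₁}

lemma _root_.IsSLTAt.nonempty_transferSubdivision (hslt : IsSLTAt X x₀) (hV : IsOpen V)
    (hx₀ : x₀ ∈ V) (δ : Path x₀ x₁) : Nonempty (TransferSubdivision δ V) := by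
  choose W hW hδW hconj using fun s => (hslt _ (δ.upTo s)).exists_conjugatesInto hV hx₀
  choose ε hε hball using fun s =>
    Metric.mem_nhds_iff.mp (((hW s).preimage δ.continuous).mem_nhds (hδW s))
  obtain ⟨τ, hτ0, hτ, ⟨m, hm⟩, hcover⟩ := exists_monotone_Icc_subset_open_cover_unitInterval
    (fun s => Metric.isOpen_ball) (fun s _ => mem_iUnion.mpr ⟨s, Metric.mem_ball_self (hε s)⟩)
  choose c hc using hcover
  refine ⟨m, τ, fun n => W (c n), hτ0, hm m le_rfl, hτ, fun n => hW (c n),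
    fun n => ((hc n).trans (hball (c n))), fun n => ?_⟩
  have hτn : τ n ∈ Metric.ball (c n) (ε (c n)) := hc n ⟨le_rfl, hτ n.le_succ⟩
  have hsub : range (δ.subpath (c n) (τ n)) ⊆ W (c n) := by
    rw [Path.range_subpath, image_subset_iff]
    exact (unitInterval.uIcc_subset_ball hτn).trans (hball (c n))
  rw [← δ.toArrow_upTo_comp_subpath (c n) (τ n)]
  exact (hconj (c n)).comp_toArrow hsub

def nbhd (S : TransferSubdivision δ V) : Set (Path x₀ x₁) :=
  {δ' | (∀ n < S.m, MapsTo δ' (Icc (S.τ n) (S.τ (n + 1))) (S.W n)) ∧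
    ∀ n, n + 1 < S.m → δ' (S.τ (n + 1)) ∈ pathComponentIn (S.W n ∩ S.W (n + 1)) (δ (S.τ (n + 1)))}

lemma nbhd_mem_nhds [LocallyPathConnectedSpace X] (S : TransferSubdivision δ V) :
    S.nbhd ∈ 𝓝 δ := by
  have hmaps : ∀ n, IsOpen {δ' : Path x₀ x₁ | MapsTo δ' (Icc (S.τ n) (S.τ (n + 1))) (S.W n)} :=
    fun n => (ContinuousMap.isOpen_setOfPred_mapsTo isCompact_Icc (S.isOpen_W n)).preimage
      continuous_induced_dom
  have hjoin : ∀ n, IsOpen {δ' : Path x₀ x₁ |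
      δ' (S.τ (n + 1)) ∈ pathComponentIn (S.W n ∩ S.W (n + 1)) (δ (S.τ (n + 1)))} :=
    fun n => (((S.isOpen_W n).inter (S.isOpen_W (n + 1))).pathComponentIn _).preimage
      (continuous_eval_const _)
  have hδ : ∀ n, δ (S.τ (n + 1)) ∈ S.W n ∩ S.W (n + 1) := fun n =>
    ⟨S.mapsTo n ⟨S.monotone_τ n.le_succ, le_rfl⟩,
      S.mapsTo (n + 1) ⟨le_rfl, S.monotone_τ (n + 1).le_succ⟩⟩
  filter_upwards [(eventually_all_finite (finite_lt_nat S.m)).mpr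
      fun n _ => (hmaps n).mem_nhds (S.mapsTo n),
    (eventually_all_finite ((finite_lt_nat S.m).subset fun n hn => Nat.lt_of_succ_lt hn)).mpr
      fun n _ => (hjoin n).mem_nhds (mem_pathComponentIn_self (hδ n))] with δ' h1 h2
  exact ⟨h1, h2⟩

lemma exists_toArrow_eq_comp (S : TransferSubdivision δ V) (hx₀ : x₀ ∈ V) {δ' : Path x₀ x₁}
    (hδ' : δ' ∈ S.nbhd) : ∃ g ∈ loopClassesIn x₀ V, δ'.toArrow = g ≫ δ.toArrow := by
  obtain ⟨hmaps, hjoin⟩ := hδ'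
  obtain ⟨k, hk⟩ : ∃ k, S.m = k + 1 := Nat.exists_eq_succ_of_ne_zero fun h => by
    simpa [h, S.τ_zero] using S.τ_m
  have key : ∀ n ≤ k, ∃ η : Path (δ (S.τ n)) (δ' (S.τ n)), range η ⊆ S.W n ∧
      ∃ g ∈ loopClassesIn x₀ V,
        (δ'.upTo (S.τ n)).toArrow = g ≫ (δ.upTo (S.τ n)).toArrow ≫ η.toArrow := by
    intro n hn
    induction n with
    | zero =>
      refine ⟨(δ.upTo _).symm.trans (δ'.upTo _), ?_, 𝟙 _, id_mem_loopClassesIn hx₀, by simp⟩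
      have h0 : Icc 0 (S.τ 0) ⊆ Icc (S.τ 0) (S.τ 1) :=
        Icc_subset_Icc S.τ_zero.le (S.monotone_τ zero_le_one)
      simp only [Path.trans_range, Path.symm_range, Path.range_upTo]
      exact union_subset ((image_mono h0).trans (S.mapsTo 0).image_subset)
        ((image_mono h0).trans (hmaps 0 (by omega)).image_subset)
    | succ n ih =>
      obtain ⟨η, hη, g, hg, hs⟩ := ih (by omega)
      have hJ := hjoin n (by omega)
      obtain ⟨g', hg', ht⟩ := exists_toArrow_upTo_eq_of_le (S.monotone_τ n.le_succ)
        (S.conjugatesInto n) (S.mapsTo n) (hmaps n (by omega)) hη (η' := hJ.somePath)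
        (range_subset_iff.mpr fun t => (hJ.somePath_mem t).1) hg hs
      exact ⟨hJ.somePath, range_subset_iff.mpr fun t => (hJ.somePath_mem t).2, g', hg', ht⟩
  obtain ⟨η, hη, g, hg, hs⟩ := key k le_rfl
  have hτ : S.τ (k + 1) = 1 := hk ▸ S.τ_m
  have hend : δ' (S.τ (k + 1)) = δ (S.τ (k + 1)) := by rw [hτ, δ.target, δ'.target]
  have hconst : range ((Path.refl _).cast rfl hend) ⊆ S.W k := by
    rw [Path.cast_coe, Path.refl_range, singleton_subset_iff]
    exact S.mapsTo k ⟨S.monotone_τ k.le_succ, le_rfl⟩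
  obtain ⟨g', hg', ht⟩ := exists_toArrow_upTo_eq_of_le (S.monotone_τ k.le_succ)
    (S.conjugatesInto k) (S.mapsTo k) (hmaps k (by omega)) hη hconst hg hs
  exact ⟨g', hg', Path.toArrow_eq_comp_of_upTo hτ hend ht⟩

end TransferSubdivision

section SmallLoops

variable {X : Type*} [TopologicalSpace X] {x₀ : X} {V : Set X}

theorem IsSLTAt.isOpen_loopClassesIn [LocallyPathConnectedSpace X] (hslt : IsSLTAt X x₀)
    (hV : IsOpen V) (hx₀ : x₀ ∈ V) : IsOpen[qtop X x₀] (loopClassesIn x₀ V) := by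
  rw [qtop, isOpen_coinduced, isOpen_iff_mem_nhds]
  intro δ hδ
  obtain ⟨S⟩ := hslt.nonempty_transferSubdivision hV hx₀ δ
  filter_upwards [S.nbhd_mem_nhds] with δ' hδ'
  obtain ⟨g, hg, hδ'δ⟩ := S.exists_toArrow_eq_comp hx₀ hδ'
  rw [mem_preimage, loopClass_eq_toArrow, hδ'δ]
  exact comp_mem_loopClassesIn_s10 hg hδ

theorem IsSLTAt.loopClassesIn_eq_univ [LocallyPathConnectedSpace X] (hslt : IsSLTAt X x₀)
    (hind : ∀ s : Set (FundamentalGroup X x₀), IsOpen[qtop X x₀] s → s = ∅ ∨ s = univ)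
    (hV : IsOpen V) (hx₀ : x₀ ∈ V) : loopClassesIn x₀ V = univ :=
  (hind _ (hslt.isOpen_loopClassesIn hV hx₀)).resolve_left
    (nonempty_of_mem (id_mem_loopClassesIn hx₀)).ne_empty

theorem IsSLTPath.isSmallLoop {x : X} {p : Path x x₀} (hp : IsSLTPath p)
    (huniv : ∀ V, IsOpen V → x₀ ∈ V → loopClassesIn x₀ V = univ) (γ : Path x x) :
    IsSmallLoop γ := by
  refine isSmallLoop_iff.mpr fun U hU hxU => ?_
  obtain ⟨W, hW, hx₀W, hconj⟩ := hp.exists_conjugatesInto hU hxU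
  obtain ⟨ζ, hζW, hζ⟩ : p.symm.toArrow ≫ γ.toArrow ≫ p.toArrow ∈ loopClassesIn x₀ W := by
    rw [huniv W hW hx₀W]
    trivial
  simpa [← loopClass_eq_toArrow, ← hζ] using hconj ζ (range_subset_iff.mpr hζW)

end SmallLoops

theorem smallLoopSpace_of_slt_of_indiscrete_general {X : Type*} [TopologicalSpace X]
    [ConnectedSpace X] [LocallyPathConnectedSpace X]
    (hslt : ∀ x : X, IsSLTAt X x) (x₀ : X)
    (hind : ∀ s : Set (FundamentalGroup X x₀), @IsOpen (FundamentalGroup X x₀) (qtop X x₀) s → s = ∅ ∨ s = Set.univ) :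
    ∀ (x : X) (γ : Path x x), IsSmallLoop γ := by
  have : PathConnectedSpace X := pathConnectedSpace_iff_connectedSpace.mpr ‹_›
  intro x
  exact (hslt x x₀ (PathConnectedSpace.somePath x x₀)).isSmallLoop
    fun V hV hx₀ => (hslt x₀).loopClassesIn_eq_univ hind hV hx₀

/-- If `X` is a connected, locally path connected SLT space and
`π₁^{qtop}(X, x₀)` is an indiscrete topological group, then `X` is a small loop space. -/
theorem smallLoopSpace_of_slt_of_indiscrete {X : Type*} [TopologicalSpace X]
    [ConnectedSpace X] [LocallyPathConnectedSpace X]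
    (hslt : ∀ x : X, IsSLTAt X x) (x₀ : X)
    (htg : @IsTopologicalGroup (FundamentalGroup X x₀) (qtop X x₀) _)
    (hind : ∀ s : Set (FundamentalGroup X x₀), @IsOpen (FundamentalGroup X x₀) (qtop X x₀) s → s = ∅ ∨ s = Set.univ) :
    ∀ (x : X) (γ : Path x x), IsSmallLoop γ :=
  smallLoopSpace_of_slt_of_indiscrete_general hslt x₀ hind
end

section
/- Let X be a topological space and x₀ ∈ X. Then X is a small "small loop" transfer space at x₀ (SSLT at x₀) if and only if for every path α in X with α(0) = x₀ and α(1) = x₁, the conjugate [α]·π₁^s(X, x₁)·[α]⁻¹ (transported along α) is contained in π₁^s(X, x₀). -/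
open TopologicalSpace

attribute [local instance] Path.Homotopic.setoid

lemma loopClass_eq_iff {X : Type*} [TopologicalSpace X] {x : X} {γ γ' : Path x x} :
    loopClass γ = loopClass γ' ↔ γ.Homotopic γ' := by
  constructor
  · intro h
    have h2 := congrArg (FundamentalGroup.toPath (X := TopCat.of X)) h
    exact Quotient.exact h2
  · intro h
    unfold loopClass
    rw [Quotient.sound h]

lemma isSmallLoop_of_homotopic {X : Type*} [TopologicalSpace X] {x : X} {γ γ' : Path x x}
    (h : γ.Homotopic γ') (hs : IsSmallLoop γ) : IsSmallLoop γ' := fun U hU hx => by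
  obtain ⟨δ, hδU, hδ⟩ := hs U hU hx
  exact ⟨δ, hδU, hδ.trans h⟩

/-- `X` is SSLT at `x₀` iff for every path `α` from `x₀` to `x₁`, the set
`[α] · π₁ˢ(X, x₁) · [α]⁻¹` (transported along `α`) is contained in `π₁ˢ(X, x₀)`. -/
theorem sslt_iff_conjugates_small {X : Type*} [TopologicalSpace X] (x₀ : X) :
    IsSSLTAt X x₀ ↔
      ∀ (x₁ : X) (α : Path x₀ x₁),
        { g : FundamentalGroup X x₀ | ∃ β : Path x₁ x₁, loopClass β ∈ pi1s x₁ ∧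
            g = loopClass ((α.trans β).trans α.symm) } ⊆ pi1s x₀ := by
  constructor
  · intro hS x₁ α g hg
    obtain ⟨β, hβ, rfl⟩ := hg
    obtain ⟨β', hβ's, hβ'eq⟩ := hβ
    have hββ' : β.Homotopic β' := loopClass_eq_iff.mp hβ'eq
    refine ⟨(α.trans β).trans α.symm, ?_, rfl⟩
    intro U hU hx
    obtain ⟨V, hV, hx₁, hVprop⟩ := hS x₁ α U hU hx
    obtain ⟨β'', hβ''V, hβ''h⟩ := hβ's V hV hx₁
    have hβ''small : IsSmallLoop β'' := isSmallLoop_of_homotopic hβ''h.symm hβ's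
    obtain ⟨γ, hγU, hγh⟩ := hVprop β'' hβ''small hβ''V
    refine ⟨γ, hγU, hγh.trans ?_⟩
    exact Path.Homotopic.hcomp (Path.Homotopic.hcomp (Path.Homotopic.refl α)
      ((hβ''h.trans hββ'.symm))) (Path.Homotopic.refl α.symm)
  · intro hC x₁ α U hU hx
    refine ⟨Set.univ, isOpen_univ, Set.mem_univ _, fun β hβs _ => ?_⟩
    have : loopClass ((α.trans β).trans α.symm) ∈ pi1s x₀ :=
      hC x₁ α ⟨β, ⟨β, hβs, rfl⟩, rfl⟩
    obtain ⟨δ, hδs, hδeq⟩ := this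
    obtain ⟨γ, hγU, hγh⟩ := hδs U hU hx
    exact ⟨γ, hγU, hγh.trans (loopClass_eq_iff.mp hδeq.symm)⟩
end
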